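/- Let θ be a probability measure on ℝⁿ with finite second moment, let X be a random vector with distribution θ, and let G be a symmetric positive definite (n+m)×(n+m) matrix with blocks G = [[G^{XX}, G^{XU}], [G^{UX}, G^{UU}]], and set P := G^{XX} − G^{XU} (G^{UU})⁻¹ G^{UX}. Then the infimum, over all measurable functions q : ℝⁿ → ℝᵐ satisfying ∫ ‖q(x)‖² θ(dx) < ∞ and ∫_{ℝⁿ} q(x) θ(dx) = 0, of tr(G · Cov([X; q(X)])) equals tr(P · Cov(θ)), and it is attained by q*(x) = −(G^{UU})⁻¹ G^{UX} (x − μ(θ)). -/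

import Mathlib

open Matrix MeasureTheory

/-- Coordinatewise mean of a random vector. -/
noncomputable def vecMean {Ω : Type*} [MeasurableSpace Ω] (μ : Measure Ω)
    {k : Type*} (S : Ω → k → ℝ) : k → ℝ :=
  fun i => ∫ ω, S ω i ∂μ

/-- Covariance matrix of a random vector:
`Cov(S) = E[(S − E[S])(S − E[S])ᵀ]`. -/
noncomputable def vecCov {Ω : Type*} [MeasurableSpace Ω] (μ : Measure Ω)
    {k : Type*} (S : Ω → k → ℝ) : Matrix k k ℝ :=
  Matrix.of fun i j => ∫ ω, (S ω i - vecMean μ S i) * (S ω j - vecMean μ S j) ∂μ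

/-- Mean `μ(θ)` of a probability measure `θ` on `ℝⁿ`. -/
noncomputable def measMean {n : ℕ} (θ : Measure (Fin n → ℝ)) : Fin n → ℝ :=
  vecMean θ id

/-- Covariance `Cov(θ)` of a probability measure `θ` on `ℝⁿ`. -/
noncomputable def measCov {n : ℕ} (θ : Measure (Fin n → ℝ)) :
    Matrix (Fin n) (Fin n) ℝ :=
  vecCov θ id

/-!
Write `c = x - μ(θ)`. Since `q` has mean zero, `tr(G · Cov)` is the expected value of the
quadratic form of `G` at the centred vector `[c; q]`. Completing the square in the `u`-block
turns that quadratic form into `cᵀ P c + zᵀ G^{UU} z` with `z = q + (G^{UU})⁻¹ G^{UX} c`, so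
`tr(G · Cov([X; q(X)])) = tr(P · Cov(θ)) + E[zᵀ G^{UU} z]`. The last term is nonnegative because
`G^{UU}` is positive definite, and it vanishes at `q = q*`.
-/

open Matrix MeasureTheory

section Covariance

variable {α : Type*} [MeasurableSpace α] {μ : Measure α} {k : Type*}

lemma vecMean_map {β : Type*} [MeasurableSpace β] {X : α → β} (hX : AEMeasurable X μ)
    {S : β → k → ℝ} (hS : ∀ i, AEStronglyMeasurable (fun b => S b i) (μ.map X)) :
    vecMean (μ.map X) S = vecMean μ (fun a => S (X a)) :=
  funext fun i => integral_map hX (hS i)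

lemma vecCov_map {β : Type*} [MeasurableSpace β] {X : α → β} (hX : AEMeasurable X μ)
    {S : β → k → ℝ} (hS : ∀ i, AEStronglyMeasurable (fun b => S b i) (μ.map X)) :
    vecCov (μ.map X) S = vecCov μ (fun a => S (X a)) := by
  ext i j
  simp only [vecCov, of_apply, vecMean_map hX hS]
  exact integral_map hX (((hS i).sub aestronglyMeasurable_const).mul
    ((hS j).sub aestronglyMeasurable_const))

lemma integrable_mul_const_mul {f g : α → ℝ} (hf : MemLp f 2 μ) (hg : MemLp g 2 μ) (c : ℝ) :
    Integrable (fun a => f a * (c * g a)) μ :=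
  ((hf.integrable_mul hg).const_mul c).congr (ae_of_all _ fun _ => mul_left_comm _ _ _)

variable [Fintype k]

lemma integrable_dotProduct_mulVec (M : Matrix k k ℝ) {T : α → k → ℝ}
    (hT : ∀ i, MemLp (fun a => T a i) 2 μ) :
    Integrable (fun a => T a ⬝ᵥ M *ᵥ T a) μ := by
  simp only [dotProduct, mulVec, Finset.mul_sum]
  exact integrable_finsetSum _ fun i _ => integrable_finsetSum _ fun j _ =>
    integrable_mul_const_mul (hT i) (hT j) (M i j)

lemma trace_mul_vecCov [IsFiniteMeasure μ] (M : Matrix k k ℝ) {S : α → k → ℝ}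
    (hS : ∀ i, MemLp (fun a => S a i) 2 μ) :
    (M * vecCov μ S).trace
      = ∫ a, (S a - vecMean μ S) ⬝ᵥ M *ᵥ (S a - vecMean μ S) ∂μ := by
  set T : α → k → ℝ := fun a => S a - vecMean μ S
  have hT : ∀ i, MemLp (fun a => T a i) 2 μ := fun i => (hS i).sub (memLp_const _)
  have hTT : ∀ i j, Integrable (fun a => T a i * (M i j * T a j)) μ := fun i j =>
    integrable_mul_const_mul (hT i) (hT j) (M i j)
  simp only [dotProduct, mulVec, Finset.mul_sum]
  rw [integral_finsetSum _ fun i _ => integrable_finsetSum _ fun j _ => hTT i j]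
  simp only [trace, diag, mul_apply, vecCov, of_apply]
  refine Finset.sum_congr rfl fun i _ => ?_
  rw [integral_finsetSum _ fun j _ => hTT i j]
  refine Finset.sum_congr rfl fun j _ => ?_
  rw [← integral_const_mul]
  congr 1 with a
  simp only [T, Pi.sub_apply]
  ring

end Covariance

section MatrixVector

variable {α : Type*} [MeasurableSpace α] {μ : Measure α} {ι κ : Type*}
  [Fintype ι] [Fintype κ]

lemma MeasureTheory.MemLp.const_mulVec {p : ENNReal} (M : Matrix κ ι ℝ) {f : α → ι → ℝ}
    (hf : MemLp f p μ) :
    MemLp (fun a => M *ᵥ f a) p μ :=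
  (LinearMap.toContinuousLinearMap (mulVecLin M)).comp_memLp' hf

lemma integral_const_mulVec (M : Matrix κ ι ℝ) {f : α → ι → ℝ} (hf : Integrable f μ) :
    ∫ a, M *ᵥ f a ∂μ = M *ᵥ ∫ a, f a ∂μ :=
  (LinearMap.toContinuousLinearMap (mulVecLin M)).integral_comp_comm hf

end MatrixVector

lemma dotProduct_fromBlocks_mulVec_sumElim {ι κ : Type*} [Fintype ι] [Fintype κ]
    [DecidableEq κ] (A : Matrix ι ι ℝ) (B : Matrix ι κ ℝ) {D : Matrix κ κ ℝ} [Invertible D]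
    (hD : D.IsHermitian) (x : ι → ℝ) (y : κ → ℝ) :
    Sum.elim x y ⬝ᵥ fromBlocks A B Bᴴ D *ᵥ Sum.elim x y
      = x ⬝ᵥ (A - B * D⁻¹ * Bᴴ) *ᵥ x
        + ((D⁻¹ * Bᴴ) *ᵥ x + y) ⬝ᵥ D *ᵥ ((D⁻¹ * Bᴴ) *ᵥ x + y) := by
  simpa [star_trivial, dotProduct_mulVec, add_comm] using schur_complement_eq₂₂ A B x y hD

section Schur

variable {n m : ℕ} {θ : Measure (Fin n → ℝ)} [IsProbabilityMeasure θ]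

lemma integral_sub_measMean (hθ : Integrable id θ) : ∫ x, (x - measMean θ) ∂θ = 0 := by
  change ∫ x, (id x - measMean θ) ∂θ = 0
  rw [integral_sub hθ (integrable_const _), integral_const, probReal_univ, one_smul, sub_eq_zero]
  exact funext (eval_integral (integrable_pi_iff.1 hθ))

lemma integral_mulVec_sub_measMean {k : Type*} [Fintype k] (M : Matrix k (Fin n) ℝ)
    (hθ : Integrable id θ) : ∫ x, M *ᵥ (x - measMean θ) ∂θ = 0 := by
  rw [integral_const_mulVec (f := fun x => x - measMean θ) _ (hθ.sub (integrable_const _)),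
    integral_sub_measMean hθ, mulVec_zero]

lemma trace_fromBlocks_mul_vecCov_sumElim (A : Matrix (Fin n) (Fin n) ℝ)
    (B : Matrix (Fin n) (Fin m) ℝ) {D : Matrix (Fin m) (Fin m) ℝ} [Invertible D]
    (hD : D.IsHermitian) (hθ : MemLp id 2 θ) {q : (Fin n → ℝ) → Fin m → ℝ}
    (hq : MemLp q 2 θ) (hq0 : ∫ x, q x ∂θ = 0) :
    (fromBlocks A B Bᴴ D * vecCov θ (fun x => Sum.elim x (q x))).trace
      = ((A - B * D⁻¹ * Bᴴ) * measCov θ).trace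
        + ∫ x, ((D⁻¹ * Bᴴ) *ᵥ (x - measMean θ) + q x)
            ⬝ᵥ D *ᵥ ((D⁻¹ * Bᴴ) *ᵥ (x - measMean θ) + q x) ∂θ := by
  have hc : MemLp (fun x => x - measMean θ) 2 θ := hθ.sub (memLp_const _)
  have hmean : vecMean θ (fun x => Sum.elim x (q x)) = Sum.elim (measMean θ) 0 := by
    funext i
    rcases i with i | i
    · rfl
    · show ∫ x, q x i ∂θ = 0
      exact (eval_integral (fun j => (hq.eval j).integrable one_le_two) i).symm.trans
        (congrFun hq0 i)
  have hS : ∀ i, MemLp (fun x => Sum.elim x (q x) i) 2 θ := by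
    rintro (i | i)
    exacts [hθ.eval i, hq.eval i]
  rw [trace_mul_vecCov _ hS, measCov, trace_mul_vecCov _ hθ.eval, ← integral_add]
  · refine integral_congr_ae (ae_of_all _ fun x => ?_)
    dsimp only
    rw [hmean, ← Sum.elim_sub_sub, sub_zero, dotProduct_fromBlocks_mulVec_sumElim A B hD]
    rfl
  · exact integrable_dotProduct_mulVec _ hc.eval
  · have hz : MemLp (fun x => (D⁻¹ * Bᴴ) *ᵥ (x - measMean θ) + q x) 2 θ :=
      (hc.const_mulVec (D⁻¹ * Bᴴ)).add hq
    exact integrable_dotProduct_mulVec _ hz.eval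

lemma trace_fromBlocks_mul_vecCov_comp_sumElim {Ω : Type*} [MeasurableSpace Ω] {P : Measure Ω}
    {X : Ω → Fin n → ℝ} (hX : AEMeasurable X P) (hXlaw : P.map X = θ)
    (A : Matrix (Fin n) (Fin n) ℝ) (B : Matrix (Fin n) (Fin m) ℝ) {D : Matrix (Fin m) (Fin m) ℝ}
    [Invertible D] (hD : D.IsHermitian) (hθ : MemLp id 2 θ) {q : (Fin n → ℝ) → Fin m → ℝ}
    (hq_meas : Measurable q) (hq : MemLp q 2 θ) (hq0 : ∫ x, q x ∂θ = 0) :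
    (fromBlocks A B Bᴴ D * vecCov P (fun ω => Sum.elim (X ω) (q (X ω)))).trace
      = ((A - B * D⁻¹ * Bᴴ) * measCov θ).trace
        + ∫ x, ((D⁻¹ * Bᴴ) *ᵥ (x - measMean θ) + q x)
            ⬝ᵥ D *ᵥ ((D⁻¹ * Bᴴ) *ᵥ (x - measMean θ) + q x) ∂θ := by
  have hS : ∀ i, AEStronglyMeasurable (fun x => Sum.elim x (q x) i) (P.map X) := by
    rintro (i | i)
    exacts [(measurable_pi_apply i).aestronglyMeasurable,
      ((measurable_pi_apply i).comp hq_meas).aestronglyMeasurable]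
  rw [← vecCov_map hX hS, hXlaw]
  exact trace_fromBlocks_mul_vecCov_sumElim A B hD hθ hq hq0

end Schur

theorem stmt6_general (n m : ℕ)
    (θ : Measure (Fin n → ℝ)) [IsProbabilityMeasure θ]
    (hθ2 : Integrable (fun x => ‖x‖ ^ 2) θ)
    {Ω : Type*} [MeasurableSpace Ω] (P : Measure Ω)
    (X : Ω → Fin n → ℝ) (hX : Measurable X) (hXlaw : Measure.map X P = θ)
    (Gxx : Matrix (Fin n) (Fin n) ℝ) (Gxu : Matrix (Fin n) (Fin m) ℝ)
    (Gux : Matrix (Fin m) (Fin n) ℝ) (Guu : Matrix (Fin m) (Fin m) ℝ)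
    (hG : (Matrix.fromBlocks Gxx Gxu Gux Guu).PosDef) :
    let G := Matrix.fromBlocks Gxx Gxu Gux Guu
    let Pm := Gxx - Gxu * Guu⁻¹ * Gux
    let qstar : (Fin n → ℝ) → Fin m → ℝ :=
      fun x => -(Guu⁻¹.mulVec (Gux.mulVec (x - measMean θ)))
    -- the value tr(P·Cov(θ)) is a lower bound over all feasible q
    (∀ q : (Fin n → ℝ) → Fin m → ℝ, Measurable q →
        Integrable (fun x => ‖q x‖ ^ 2) θ → (∫ x, q x ∂θ) = 0 →
        (Pm * measCov θ).trace ≤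
          (G * vecCov P (fun ω => Sum.elim (X ω) (q (X ω)))).trace) ∧
    -- and it is attained by the feasible function q*
    Measurable qstar ∧ Integrable (fun x => ‖qstar x‖ ^ 2) θ ∧
    (∫ x, qstar x ∂θ) = 0 ∧
    (G * vecCov P (fun ω => Sum.elim (X ω) (qstar (X ω)))).trace =
      (Pm * measCov θ).trace := by
  intro G Pm qstar
  obtain ⟨-, rfl, -, hGuuH⟩ := isHermitian_fromBlocks_iff.1 hG.isHermitian
  have hGuu : Guu.PosDef := hG.submatrix Sum.inr_injective
  have := hGuu.isUnit.invertible
  have hθ : MemLp id 2 θ := (memLp_two_iff_integrable_sq_norm aestronglyMeasurable_id).2 hθ2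
  have htrace q (hq : Measurable q) (hq2 : Integrable (fun x => ‖q x‖ ^ 2) θ) :=
    trace_fromBlocks_mul_vecCov_comp_sumElim hX.aemeasurable hXlaw Gxx Gxu hGuuH hθ hq
      ((memLp_two_iff_integrable_sq_norm hq.aestronglyMeasurable).2 hq2)
  have hqstar : qstar = fun x => -((Guu⁻¹ * Gxuᴴ) *ᵥ (x - measMean θ)) := by
    simp only [qstar, mulVec_mulVec]
  have hqstar_meas : Measurable qstar := hqstar ▸ by fun_prop
  have hqstar2 : Integrable (fun x => ‖qstar x‖ ^ 2) θ :=
    (memLp_two_iff_integrable_sq_norm hqstar_meas.aestronglyMeasurable).1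
      (hqstar ▸ ((hθ.sub (memLp_const _)).const_mulVec _).neg)
  have hqstar0 : ∫ x, qstar x ∂θ = 0 := by
    rw [hqstar, integral_neg, integral_mulVec_sub_measMean _ (hθ.integrable one_le_two),
      neg_zero]
  refine ⟨fun q hq hq2 hq0 => ?_, hqstar_meas, hqstar2, hqstar0, ?_⟩
  · rw [htrace q hq hq2 hq0, le_add_iff_nonneg_right]
    exact integral_nonneg fun x => hGuu.posSemidef.dotProduct_mulVec_nonneg _
  · rw [htrace qstar hqstar_meas hqstar2 hqstar0]
    simp only [hqstar, Pm, add_neg_cancel, zero_dotProduct, integral_zero, add_zero]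

/-- The infimum, over all measurable `q : ℝⁿ → ℝᵐ` with
`∫ ‖q‖² dθ < ∞` and `∫ q dθ = 0`, of `tr(G · Cov([X; q(X)]))` equals
`tr(P · Cov(θ))`, and it is attained by `q*(x) = −Guu⁻¹ Gux (x − μ(θ))`. -/
theorem stmt6 (n m : ℕ)
    (θ : Measure (Fin n → ℝ)) [IsProbabilityMeasure θ]
    (hθ2 : Integrable (fun x => ‖x‖ ^ 2) θ)
    {Ω : Type*} [MeasurableSpace Ω] (P : Measure Ω) [IsProbabilityMeasure P]
    (X : Ω → Fin n → ℝ) (hX : Measurable X) (hXlaw : Measure.map X P = θ)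
    (Gxx : Matrix (Fin n) (Fin n) ℝ) (Gxu : Matrix (Fin n) (Fin m) ℝ)
    (Gux : Matrix (Fin m) (Fin n) ℝ) (Guu : Matrix (Fin m) (Fin m) ℝ)
    (hG : (Matrix.fromBlocks Gxx Gxu Gux Guu).PosDef) :
    let G := Matrix.fromBlocks Gxx Gxu Gux Guu
    let Pm := Gxx - Gxu * Guu⁻¹ * Gux
    let qstar : (Fin n → ℝ) → Fin m → ℝ :=
      fun x => -(Guu⁻¹.mulVec (Gux.mulVec (x - measMean θ)))
    -- the value tr(P·Cov(θ)) is a lower bound over all feasible q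
    (∀ q : (Fin n → ℝ) → Fin m → ℝ, Measurable q →
        Integrable (fun x => ‖q x‖ ^ 2) θ → (∫ x, q x ∂θ) = 0 →
        (Pm * measCov θ).trace ≤
          (G * vecCov P (fun ω => Sum.elim (X ω) (q (X ω)))).trace) ∧
    -- and it is attained by the feasible function q*
    Measurable qstar ∧ Integrable (fun x => ‖qstar x‖ ^ 2) θ ∧
    (∫ x, qstar x ∂θ) = 0 ∧
    (G * vecCov P (fun ω => Sum.elim (X ω) (qstar (X ω)))).trace =
      (Pm * measCov θ).trace :=
  stmt6_general n m θ hθ2 P X hX hXlaw Gxx Gxu Gux Guu hG
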